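/- arXiv:2109.00243 — 2 statements merged into one kernel-verified Lean document; each statement's English description precedes it below -/
import Mathlib

section
/- Let τ>0 and set T = tanh(2τ)/2. Then the null-reachable space of the Hermite heat equation on the half-line equals that of the heat equation on the half-line up to the change of time τ ↦ T: the set of functions (0,∞)→ℂ of the form x ↦ Φ^H_{τ,0}u₀(x) with u₀ ∈ L²((0,τ);ℂ) coincides with the set of functions of the form x ↦ Φ_{T,0}f(x) with f ∈ L²((0,T);ℂ). -/
open MeasureTheory

/-- Null-solution operator of the Hermite heat equation on the half-line controlled at `0`. -/
noncomputable def PhiH0 (τ : ℝ) (u : ℝ → ℂ) (z : ℂ) : ℂ :=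
  ((Real.sqrt (2 / Real.pi) : ℝ) : ℂ) * z *
    ∫ s in Set.Ioo 0 τ,
      ((Real.sinh (2 * (τ - s)) ^ (-(3 : ℝ) / 2) : ℝ) : ℂ) *
        Complex.exp
          (-(((Real.cosh (2 * (τ - s)) / Real.sinh (2 * (τ - s))) : ℝ) : ℂ) * z ^ 2 / 2) * u s

/-- Null-solution operator of the heat equation on the half-line controlled at `0`. -/
noncomputable def Phi0 (T : ℝ) (f : ℝ → ℂ) (z : ℂ) : ℂ :=
  ∫ σ in Set.Ioo 0 T,
    z * Complex.exp (-z ^ 2 / (4 * ((T - σ : ℝ) : ℂ))) /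
      (((2 * Real.sqrt Real.pi * ((T - σ) ^ ((3 : ℝ) / 2)) : ℝ)) : ℂ) * f σ


open Set
open scoped ENNReal

noncomputable def phiM (τ T s : ℝ) : ℝ := T - Real.tanh (2 * (τ - s)) / 2

noncomputable def psiM (τ T σ : ℝ) : ℝ :=
  τ - Real.log ((1 + 2 * (T - σ)) / (1 - 2 * (T - σ))) / 4

lemma tanh_lt_tanh' {a b : ℝ} (h : a < b) : Real.tanh a < Real.tanh b := by
  rw [Real.tanh_eq_sinh_div_cosh, Real.tanh_eq_sinh_div_cosh,
    div_lt_div_iff₀ (Real.cosh_pos a) (Real.cosh_pos b)]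
  have h1 : 0 < Real.sinh (b - a) := Real.sinh_pos_iff.mpr (sub_pos.2 h)
  rw [Real.sinh_sub] at h1
  linarith

lemma tanh_pos' {h : ℝ} (hh : 0 < h) : 0 < Real.tanh h := by
  simpa using tanh_lt_tanh' hh

lemma tanh_lt_one' (h : ℝ) : Real.tanh h < 1 := by
  rw [Real.tanh_eq_sinh_div_cosh, div_lt_one (Real.cosh_pos h)]
  have := Real.cosh_sub_sinh h
  have := Real.exp_pos (-h)
  linarith

lemma ratio_tanh (h : ℝ) :
    (1 + Real.tanh h) / (1 - Real.tanh h) = Real.exp (2 * h) := by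
  have hc := (Real.cosh_pos h).ne'
  have h1 : 1 + Real.tanh h = Real.exp h / Real.cosh h := by
    rw [Real.tanh_eq_sinh_div_cosh, ← Real.cosh_add_sinh]
    field_simp
  have h2 : 1 - Real.tanh h = Real.exp (-h) / Real.cosh h := by
    rw [Real.tanh_eq_sinh_div_cosh, ← Real.cosh_sub_sinh]
    field_simp
  rw [h1, h2, div_div_div_cancel_right₀, ← Real.exp_sub]
  · ring_nf
  · exact hc

lemma tanh_half_log {x : ℝ} (h0 : 0 < x) (h1 : x < 1) :
    Real.tanh (Real.log ((1 + x) / (1 - x)) / 2) = x := by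
  set y := Real.log ((1 + x) / (1 - x)) / 2 with hy
  have hr : 0 < (1 + x) / (1 - x) := div_pos (by linarith) (by linarith)
  have h2 : Real.exp y * Real.exp y = (1 + x) / (1 - x) := by
    rw [← Real.exp_add, show y + y = Real.log ((1 + x) / (1 - x)) by rw [hy]; ring,
      Real.exp_log hr]
  have hey := Real.exp_pos y
  rw [Real.tanh_eq_sinh_div_cosh, Real.sinh_eq, Real.cosh_eq, Real.exp_neg]
  rw [div_div_div_cancel_right₀]
  · have h2' : Real.exp y * Real.exp y * (1 - x) = 1 + x := by
      rw [h2, div_mul_eq_mul_div, mul_div_assoc, div_self (by linarith : (1:ℝ) - x ≠ 0), mul_one]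
    field_simp
    linear_combination h2'
  · positivity

lemma psiM_phiM (τ T : ℝ) (s : ℝ) : psiM τ T (phiM τ T s) = s := by
  have : T - phiM τ T s = Real.tanh (2 * (τ - s)) / 2 := by simp [phiM]
  rw [psiM, this, show 2 * (Real.tanh (2 * (τ - s)) / 2) = Real.tanh (2 * (τ - s)) by ring,
    ratio_tanh, Real.log_exp]
  ring

lemma phiM_inj (τ T : ℝ) : Function.Injective (phiM τ T) := by
  intro a b h
  have := congrArg (psiM τ T) h
  simpa [psiM_phiM] using this


lemma T_pos (hτ : 0 < τ) (hT : T = Real.tanh (2 * τ) / 2) : 0 < T := by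
  rw [hT]; have := tanh_pos' (by linarith : (0:ℝ) < 2 * τ); linarith

lemma twoT_lt_one (hT : T = Real.tanh (2 * τ) / 2) : 2 * T < 1 := by
  rw [hT]; have := tanh_lt_one' (2 * τ); linarith

lemma phiM_psiM (hτ : 0 < τ) (hT : T = Real.tanh (2 * τ) / 2) {σ : ℝ}
    (hσ : σ ∈ Ioo 0 T) : phiM τ T (psiM τ T σ) = σ := by
  obtain ⟨h0, h1⟩ := hσ
  have hx0 : 0 < 2 * (T - σ) := by linarith
  have hx1 : 2 * (T - σ) < 1 := by have := twoT_lt_one (τ := τ) hT; linarith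
  have : 2 * (τ - psiM τ T σ) = Real.log ((1 + 2 * (T - σ)) / (1 - 2 * (T - σ))) / 2 := by
    rw [psiM]; ring
  rw [phiM, this, tanh_half_log hx0 hx1]
  ring

lemma psiM_mem (hτ : 0 < τ) (hT : T = Real.tanh (2 * τ) / 2) {σ : ℝ}
    (hσ : σ ∈ Ioo 0 T) : psiM τ T σ ∈ Ioo 0 τ := by
  obtain ⟨h0, h1⟩ := hσ
  set w := Real.log ((1 + 2 * (T - σ)) / (1 - 2 * (T - σ))) / 2 with hw
  have htw : Real.tanh w = 2 * (T - σ) :=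
    tanh_half_log (by linarith) (by have := twoT_lt_one (τ := τ) hT; linarith)
  have hw0 : 0 < w := by
    by_contra hc
    push_neg at hc
    rcases eq_or_lt_of_le hc with h | h
    · rw [h] at htw; rw [Real.tanh_zero] at htw; linarith
    · have h2 := tanh_lt_tanh' h
      rw [htw, Real.tanh_zero] at h2; linarith
  have hw2 : w < 2 * τ := by
    by_contra hc
    push_neg at hc
    rcases eq_or_lt_of_le hc with h | h
    · rw [← h] at htw; linarith
    · have h2 := tanh_lt_tanh' h
      rw [htw] at h2; linarith
  have hps : psiM τ T σ = τ - w / 2 := by rw [psiM, hw]; ring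
  constructor
  · rw [hps]; linarith
  · rw [hps]; linarith

lemma phiM_image (hτ : 0 < τ) (hT : T = Real.tanh (2 * τ) / 2) :
    phiM τ T '' (Ioo 0 τ) = Ioo 0 T := by
  ext σ
  constructor
  · rintro ⟨s, ⟨hs0, hs1⟩, rfl⟩
    have h1 : 0 < Real.tanh (2 * (τ - s)) := tanh_pos' (by linarith)
    have h2 : Real.tanh (2 * (τ - s)) < Real.tanh (2 * τ) := tanh_lt_tanh' (by linarith)
    constructor
    · rw [phiM, hT]; linarith
    · rw [phiM]; linarith
  · intro hσ
    exact ⟨psiM τ T σ, psiM_mem hτ hT hσ, phiM_psiM hτ hT hσ⟩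

lemma phiM_hasDerivAt (τ T : ℝ) (s : ℝ) :
    HasDerivAt (phiM τ T) (1 / Real.cosh (2 * (τ - s)) ^ 2) s := by
  have h1 : HasDerivAt (fun s : ℝ => 2 * (τ - s)) (-2) s := by
    simpa using ((hasDerivAt_id s).const_sub τ).const_mul 2
  have hs := (Real.hasDerivAt_sinh (2 * (τ - s))).comp s h1
  have hc := (Real.hasDerivAt_cosh (2 * (τ - s))).comp s h1
  have hd := hs.div hc (Real.cosh_pos _).ne'
  have hfin := (hd.div_const 2).const_sub T
  simp only [Function.comp] at hfin
  have heq : (fun x => T - Real.sinh (2 * (τ - x)) / Real.cosh (2 * (τ - x)) / 2) = phiM τ T := by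
    funext x; rw [phiM, Real.tanh_eq_sinh_div_cosh]
  simp only [Pi.div_apply, Function.comp_apply] at hfin; rw [heq] at hfin
  convert hfin using 1
  pick_goal 3
  have hco := Real.cosh_sq_sub_sinh_sq (2 * (τ - s))
  have hne := (Real.cosh_pos (2 * (τ - s))).ne'
  rw [div_div, ← neg_div, div_eq_div_iff (by positivity) (by positivity)]
  linear_combination (-2 * Real.cosh (2 * (τ - s)) ^ 2) * hco
  all_goals rfl


lemma changeB (hτ : 0 < τ) (hT : T = Real.tanh (2 * τ) / 2) (g : ℝ → ℂ) :
    ∫ σ in Ioo 0 T, g σ =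
      ∫ s in Ioo 0 τ, |1 / Real.cosh (2 * (τ - s)) ^ 2| • g (phiM τ T s) := by
  rw [← phiM_image hτ hT]
  exact integral_image_eq_integral_abs_deriv_smul measurableSet_Ioo
    (fun s _ => (phiM_hasDerivAt τ T s).hasDerivWithinAt) ((phiM_inj τ T).injOn) g

lemma changeL (hτ : 0 < τ) (hT : T = Real.tanh (2 * τ) / 2) (g : ℝ → ℝ≥0∞) :
    ∫⁻ σ in Ioo 0 T, g σ =
      ∫⁻ s in Ioo 0 τ, ENNReal.ofReal (1 / Real.cosh (2 * (τ - s)) ^ 2) * g (phiM τ T s) := by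
  rw [← phiM_image hτ hT]
  have h := lintegral_image_eq_lintegral_abs_det_fderiv_mul (s := Ioo (0:ℝ) τ) volume measurableSet_Ioo
    (fun s _ => ((phiM_hasDerivAt τ T s).hasDerivWithinAt).hasFDerivWithinAt)
    ((phiM_inj τ T).injOn) g
  rw [h]
  congr 1
  funext s
  congr 2
  rw [ContinuousLinearMap.det_toSpanSingleton, abs_of_pos]
  positivity

lemma coefKey {h : ℝ} (hh : 0 < h) :
    1 / Real.cosh h ^ 2 * Real.sqrt (Real.cosh h) /
      (2 * Real.sqrt Real.pi * ((Real.tanh h / 2) ^ ((3:ℝ)/2))) =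
    Real.sqrt (2 / Real.pi) * Real.sinh h ^ (-(3:ℝ)/2) := by
  have hs : 0 < Real.sinh h := Real.sinh_pos_iff.mpr hh
  have hc : 0 < Real.cosh h := Real.cosh_pos h
  have hπ : 0 < Real.pi := Real.pi_pos
  have ht : Real.tanh h / 2 = Real.sinh h / (2 * Real.cosh h) := by
    rw [Real.tanh_eq_sinh_div_cosh, div_div, mul_comm]
  rw [ht, Real.div_rpow hs.le (by positivity), Real.mul_rpow (by norm_num) hc.le,
    Real.sqrt_eq_rpow, Real.sqrt_eq_rpow, Real.sqrt_eq_rpow,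
    Real.div_rpow (by norm_num) hπ.le,
    show -(3:ℝ)/2 = -((3:ℝ)/2) by norm_num, Real.rpow_neg hs.le]
  have h2 : (2:ℝ) ^ ((3:ℝ)/2) = 2 * 2 ^ ((1:ℝ)/2) := by
    rw [show (3:ℝ)/2 = 1 + 1/2 by norm_num, Real.rpow_add (by norm_num), Real.rpow_one]
  have hch : Real.cosh h ^ ((1:ℝ)/2) * Real.cosh h ^ ((3:ℝ)/2) = Real.cosh h ^ 2 := by
    rw [← Real.rpow_add hc, show (1:ℝ)/2 + 3/2 = 2 by norm_num, ← Real.rpow_natCast (Real.cosh h) 2]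
    norm_num
  have hne1 : Real.cosh h ^ ((3:ℝ)/2) ≠ 0 := by positivity
  have hne2 : Real.sinh h ^ ((3:ℝ)/2) ≠ 0 := by positivity
  have hne3 : Real.pi ^ ((1:ℝ)/2) ≠ 0 := by positivity
  rw [h2]
  field_simp
  linear_combination hch


lemma core (hτ : 0 < τ) (hT : T = Real.tanh (2 * τ) / 2) (u v : ℝ → ℂ)
    (huv : ∀ s ∈ Ioo 0 τ,
      v (phiM τ T s) = ((Real.sqrt (Real.cosh (2 * (τ - s))) : ℝ) : ℂ) * u s)
    (x : ℂ) : Phi0 T v x = PhiH0 τ u x := by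
  rw [Phi0, changeB hτ hT, PhiH0, ← MeasureTheory.integral_const_mul]
  apply setIntegral_congr_fun measurableSet_Ioo
  intro s hs
  dsimp only
  obtain ⟨hs0, hs1⟩ := hs
  have hh : 0 < 2 * (τ - s) := by linarith
  have hsh : 0 < Real.sinh (2 * (τ - s)) := Real.sinh_pos_iff.mpr hh
  have hch : 0 < Real.cosh (2 * (τ - s)) := Real.cosh_pos _
  have hπ : 0 < Real.pi := Real.pi_pos
  have hTs : T - phiM τ T s = Real.tanh (2 * (τ - s)) / 2 := by simp [phiM]
  have ht0 : 0 < Real.tanh (2 * (τ - s)) := tanh_pos' hh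
  have hsc : ((Real.sinh (2 * (τ - s)) : ℝ) : ℂ) ≠ 0 := by exact_mod_cast hsh.ne'
  have hcc : ((Real.cosh (2 * (τ - s)) : ℝ) : ℂ) ≠ 0 := by exact_mod_cast hch.ne'
  have hE : -x ^ 2 / (4 * ((T - phiM τ T s : ℝ) : ℂ)) =
      -(((Real.cosh (2 * (τ - s)) / Real.sinh (2 * (τ - s))) : ℝ) : ℂ) * x ^ 2 / 2 := by
    rw [hTs, Real.tanh_eq_sinh_div_cosh]
    push_cast
    field_simp
    ring
  have habs : |1 / Real.cosh (2 * (τ - s)) ^ 2| = 1 / Real.cosh (2 * (τ - s)) ^ 2 :=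
    abs_of_pos (by positivity)
  rw [huv s ⟨hs0, hs1⟩, hE, hTs, habs, Complex.real_smul]
  have key := coefKey hh
  calc
    ((1 / Real.cosh (2 * (τ - s)) ^ 2 : ℝ) : ℂ) *
        (x * Complex.exp (-(((Real.cosh (2 * (τ - s)) / Real.sinh (2 * (τ - s))) : ℝ) : ℂ)
            * x ^ 2 / 2) /
          (((2 * Real.sqrt Real.pi * ((Real.tanh (2 * (τ - s)) / 2) ^ ((3 : ℝ) / 2)) : ℝ)) : ℂ) *
          (((Real.sqrt (Real.cosh (2 * (τ - s))) : ℝ) : ℂ) * u s))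
      = ((1 / Real.cosh (2 * (τ - s)) ^ 2 * Real.sqrt (Real.cosh (2 * (τ - s))) /
            (2 * Real.sqrt Real.pi * ((Real.tanh (2 * (τ - s)) / 2) ^ ((3:ℝ)/2))) : ℝ) : ℂ) *
          (x * Complex.exp (-(((Real.cosh (2 * (τ - s)) / Real.sinh (2 * (τ - s))) : ℝ) : ℂ)
            * x ^ 2 / 2) * u s) := by
        push_cast
        ring
    _ = ((Real.sqrt (2 / Real.pi) * Real.sinh (2 * (τ - s)) ^ (-(3:ℝ)/2) : ℝ) : ℂ) *
          (x * Complex.exp (-(((Real.cosh (2 * (τ - s)) / Real.sinh (2 * (τ - s))) : ℝ) : ℂ)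
            * x ^ 2 / 2) * u s) := by rw [key]
    _ = ((Real.sqrt (2 / Real.pi) : ℝ) : ℂ) * x *
          (((Real.sinh (2 * (τ - s)) ^ (-(3 : ℝ) / 2) : ℝ) : ℂ) *
            Complex.exp (-(((Real.cosh (2 * (τ - s)) / Real.sinh (2 * (τ - s))) : ℝ) : ℂ)
              * x ^ 2 / 2) * u s) := by
        push_cast
        ring


lemma memLp2_iff {f : ℝ → ℂ} {μ : Measure ℝ} :
    MemLp f 2 μ ↔ AEStronglyMeasurable f μ ∧
      (∫⁻ a, (‖f a‖₊ : ℝ≥0∞) ^ (2:ℝ) ∂μ) < ⊤ := by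
  constructor
  · rintro ⟨h1, h2⟩
    refine ⟨h1, ?_⟩
    have := (eLpNorm_lt_top_iff_lintegral_rpow_enorm_lt_top
      (by norm_num) (by norm_num)).1 h2
    simpa [enorm_eq_nnnorm] using this
  · rintro ⟨h1, h2⟩
    refine ⟨h1, ?_⟩
    rw [eLpNorm_lt_top_iff_lintegral_rpow_enorm_lt_top (by norm_num) (by norm_num)]
    simpa [enorm_eq_nnnorm] using h2

lemma sq_nnnorm_mul {r : ℝ} (hr : 0 ≤ r) (z : ℂ) :
    ((‖(r:ℂ) * z‖₊ : ℝ≥0∞)) ^ (2:ℝ) =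
      ENNReal.ofReal (r^2) * (‖z‖₊ : ℝ≥0∞) ^ (2:ℝ) := by
  rw [show ((2:ℝ)) = ((2:ℕ):ℝ) by norm_num, ENNReal.rpow_natCast, ENNReal.rpow_natCast,
    nnnorm_mul, Complex.nnnorm_real, ENNReal.coe_mul, mul_pow,
    ← enorm_eq_nnnorm, Real.enorm_eq_ofReal hr, ← ENNReal.ofReal_pow hr]

lemma psiM_measurable : Measurable (psiM τ T) := by
  unfold psiM
  exact measurable_const.sub ((Real.measurable_log.comp (by fun_prop)).div_const 4)

lemma phiM_measurable : Measurable (phiM τ T) := by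
  have : Continuous (phiM τ T) := by
    rw [continuous_iff_continuousAt]
    exact fun s => (phiM_hasDerivAt τ T s).continuousAt
  exact this.measurable

lemma mem1 (hτ : 0 < τ) (hT : T = Real.tanh (2 * τ) / 2) {u : ℝ → ℂ}
    (hm : StronglyMeasurable u)
    (hu : (∫⁻ s in Ioo 0 τ, (‖u s‖₊ : ℝ≥0∞) ^ (2:ℝ)) < ⊤) :
    MemLp (fun σ => ((Real.sqrt (Real.cosh (2 * (τ - psiM τ T σ))) : ℝ) : ℂ) *
      u (psiM τ T σ)) 2 (volume.restrict (Ioo 0 T)) := by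
  rw [memLp2_iff]
  constructor
  · refine (Measurable.stronglyMeasurable ?_).aestronglyMeasurable
    refine Measurable.mul ?_ (hm.measurable.comp psiM_measurable)
    exact Complex.measurable_ofReal.comp
      (((Real.continuous_sqrt.comp Real.continuous_cosh).measurable).comp
        ((measurable_const.sub psiM_measurable).const_mul 2))
  · rw [changeL hτ hT]
    calc
      ∫⁻ s in Ioo 0 τ, ENNReal.ofReal (1 / Real.cosh (2 * (τ - s)) ^ 2) *
          (‖((Real.sqrt (Real.cosh (2 * (τ - psiM τ T (phiM τ T s)))) : ℝ) : ℂ) *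
            u (psiM τ T (phiM τ T s))‖₊ : ℝ≥0∞) ^ (2:ℝ)
        ≤ ∫⁻ s in Ioo 0 τ, (‖u s‖₊ : ℝ≥0∞) ^ (2:ℝ) := by
          apply lintegral_mono
          intro s
          dsimp only
          rw [psiM_phiM, sq_nnnorm_mul (Real.sqrt_nonneg _),
            Real.sq_sqrt (Real.cosh_pos _).le, ← mul_assoc,
            ← ENNReal.ofReal_mul (by positivity)]
          have h1 : 1 / Real.cosh (2 * (τ - s)) ^ 2 * Real.cosh (2 * (τ - s)) ≤ 1 := by
            rw [div_mul_eq_mul_div, one_mul, div_le_one (by positivity), pow_two]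
            nlinarith [Real.one_le_cosh (2 * (τ - s)), Real.cosh_pos (2 * (τ - s))]
          calc ENNReal.ofReal (1 / Real.cosh (2 * (τ - s)) ^ 2 * Real.cosh (2 * (τ - s))) *
                (‖u s‖₊ : ℝ≥0∞) ^ (2:ℝ)
              ≤ 1 * (‖u s‖₊ : ℝ≥0∞) ^ (2:ℝ) := by
                gcongr
                exact ENNReal.ofReal_le_one.mpr h1
            _ = (‖u s‖₊ : ℝ≥0∞) ^ (2:ℝ) := one_mul _
      _ < ⊤ := hu

lemma mem2 (hτ : 0 < τ) (hT : T = Real.tanh (2 * τ) / 2) {f : ℝ → ℂ}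
    (hm : StronglyMeasurable f)
    (hf : (∫⁻ σ in Ioo 0 T, (‖f σ‖₊ : ℝ≥0∞) ^ (2:ℝ)) < ⊤) :
    MemLp (fun s => (((Real.sqrt (Real.cosh (2 * (τ - s))))⁻¹ : ℝ) : ℂ) *
      f (phiM τ T s)) 2 (volume.restrict (Ioo 0 τ)) := by
  rw [memLp2_iff]
  constructor
  · refine (Measurable.stronglyMeasurable ?_).aestronglyMeasurable
    refine Measurable.mul ?_ (hm.measurable.comp phiM_measurable)
    refine Complex.measurable_ofReal.comp ?_
    refine Measurable.inv ?_
    exact ((Real.continuous_sqrt.comp Real.continuous_cosh).measurable).comp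
      ((measurable_const.sub measurable_id).const_mul 2)
  · have key := changeL hτ hT (fun σ => (‖f σ‖₊ : ℝ≥0∞) ^ (2:ℝ))
    have hbound : ∫⁻ s in Ioo 0 τ,
        (‖(((Real.sqrt (Real.cosh (2 * (τ - s))))⁻¹ : ℝ) : ℂ) * f (phiM τ T s)‖₊ : ℝ≥0∞) ^ (2:ℝ)
        ≤ ∫⁻ s in Ioo 0 τ, ENNReal.ofReal (Real.cosh (2 * τ)) *
            (ENNReal.ofReal (1 / Real.cosh (2 * (τ - s)) ^ 2) *
              (‖f (phiM τ T s)‖₊ : ℝ≥0∞) ^ (2:ℝ)) := by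
      apply setLIntegral_mono' measurableSet_Ioo
      intro s hs
      obtain ⟨hs0, hs1⟩ := hs
      have hch := Real.cosh_pos (2 * (τ - s))
      rw [sq_nnnorm_mul (by positivity), ← mul_assoc, ← ENNReal.ofReal_mul (by positivity)]
      have hle : Real.cosh (2 * (τ - s)) ≤ Real.cosh (2 * τ) := by
        have h1 : |2 * (τ - s)| < |2 * τ| := by
          rw [abs_of_pos (by linarith), abs_of_pos (by linarith)]
          linarith
        exact (Real.cosh_lt_cosh.mpr h1).le
      gcongr
      rw [← Real.sqrt_inv, Real.sq_sqrt (by positivity), mul_one_div,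
        le_div_iff₀ (by positivity)]
      calc (Real.cosh (2 * (τ - s)))⁻¹ * Real.cosh (2 * (τ - s)) ^ 2
          = Real.cosh (2 * (τ - s)) := by
            rw [pow_two, ← mul_assoc, inv_mul_cancel₀ hch.ne', one_mul]
        _ ≤ Real.cosh (2 * τ) := hle
    calc ∫⁻ s in Ioo 0 τ,
          (‖(((Real.sqrt (Real.cosh (2 * (τ - s))))⁻¹ : ℝ) : ℂ) * f (phiM τ T s)‖₊ : ℝ≥0∞) ^ (2:ℝ)
        ≤ ∫⁻ s in Ioo 0 τ, ENNReal.ofReal (Real.cosh (2 * τ)) *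
            (ENNReal.ofReal (1 / Real.cosh (2 * (τ - s)) ^ 2) *
              (‖f (phiM τ T s)‖₊ : ℝ≥0∞) ^ (2:ℝ)) := hbound
      _ = ENNReal.ofReal (Real.cosh (2 * τ)) *
            ∫⁻ s in Ioo 0 τ, ENNReal.ofReal (1 / Real.cosh (2 * (τ - s)) ^ 2) *
              (‖f (phiM τ T s)‖₊ : ℝ≥0∞) ^ (2:ℝ) :=
          lintegral_const_mul' _ _ ENNReal.ofReal_ne_top
      _ = ENNReal.ofReal (Real.cosh (2 * τ)) * ∫⁻ σ in Ioo 0 T, (‖f σ‖₊ : ℝ≥0∞) ^ (2:ℝ) := by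
          rw [← key]
      _ < ⊤ := ENNReal.mul_lt_top ENNReal.ofReal_lt_top hf

theorem stmt2 (τ : ℝ) (hτ : 0 < τ) (T : ℝ) (hT : T = Real.tanh (2 * τ) / 2) :
    {F : ℝ → ℂ | ∃ u0 : ℝ → ℂ, MemLp u0 2 (volume.restrict (Set.Ioo 0 τ)) ∧
        ∀ x : ℝ, 0 < x → F x = PhiH0 τ u0 (x : ℂ)} =
    {F : ℝ → ℂ | ∃ f : ℝ → ℂ, MemLp f 2 (volume.restrict (Set.Ioo 0 T)) ∧
        ∀ x : ℝ, 0 < x → F x = Phi0 T f (x : ℂ)} := by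
  ext F
  simp only [Set.mem_setOf_eq]
  constructor
  · rintro ⟨u0, hu, hF⟩
    set u' := hu.1.mk u0 with hu'def
    have hmk : u0 =ᵐ[volume.restrict (Ioo 0 τ)] u' := hu.1.ae_eq_mk
    have hm : StronglyMeasurable u' := hu.1.stronglyMeasurable_mk
    have hu' : MemLp u' 2 (volume.restrict (Ioo 0 τ)) := hu.ae_eq hmk
    refine ⟨fun σ => ((Real.sqrt (Real.cosh (2 * (τ - psiM τ T σ))) : ℝ) : ℂ) *
      u' (psiM τ T σ), mem1 hτ hT hm ((memLp2_iff.mp hu').2), ?_⟩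
    intro x hx
    rw [hF x hx]
    have h1 : PhiH0 τ u0 x = PhiH0 τ u' x := by
      unfold PhiH0
      congr 1
      apply integral_congr_ae
      exact hmk.mono fun s hs => by dsimp only; rw [hs]
    rw [h1]
    exact (core hτ hT u' _ (fun s _ => by rw [psiM_phiM]) x).symm
  · rintro ⟨f, hf, hF⟩
    set f' := hf.1.mk f with hf'def
    have hmk : f =ᵐ[volume.restrict (Ioo 0 T)] f' := hf.1.ae_eq_mk
    have hm : StronglyMeasurable f' := hf.1.stronglyMeasurable_mk
    have hf' : MemLp f' 2 (volume.restrict (Ioo 0 T)) := hf.ae_eq hmk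
    refine ⟨fun s => (((Real.sqrt (Real.cosh (2 * (τ - s))))⁻¹ : ℝ) : ℂ) *
      f' (phiM τ T s), mem2 hτ hT hm ((memLp2_iff.mp hf').2), ?_⟩
    intro x hx
    rw [hF x hx]
    have h1 : Phi0 T f x = Phi0 T f' x := by
      unfold Phi0
      apply integral_congr_ae
      exact hmk.mono fun σ hσ => by dsimp only; rw [hσ]
    rw [h1]
    refine core hτ hT _ f' (fun s _ => ?_) x
    have h2 : ((Real.sqrt (Real.cosh (2 * (τ - s))) : ℝ) : ℂ) ≠ 0 := by
      have : (0:ℝ) < Real.sqrt (Real.cosh (2 * (τ - s))) := by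
        have := Real.cosh_pos (2 * (τ - s)); positivity
      exact_mod_cast this.ne'
    rw [Complex.ofReal_inv, ← mul_assoc, mul_inv_cancel₀ h2, one_mul]
end

section
/- Let τ>0, T = tanh(2τ)/2, and u₀ ∈ L²((0,τ);ℂ). Define ũ₀ on (0,T) by ũ₀(t) = (1 − 4(T−t)²)^{−1/4} · u₀(τ − artanh(2(T−t))/2). Then for every z ∈ ℂ, Φ^H_{τ,0}u₀(z) = Φ_{T,0}ũ₀(z). -/
open MeasureTheory

/-- Inverse hyperbolic tangent. -/
noncomputable def artanh (x : ℝ) : ℝ := Real.log ((1 + x) / (1 - x)) / 2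

lemma tanh_strictMono' : StrictMono Real.tanh := by
  intro x y h
  rw [Real.tanh_eq_sinh_div_cosh, Real.tanh_eq_sinh_div_cosh,
    div_lt_div_iff₀ (Real.cosh_pos x) (Real.cosh_pos y)]
  have h2 : Real.sinh (x - y) < 0 := by
    have : Real.sinh (x - y) < Real.sinh 0 := Real.sinh_lt_sinh.2 (by linarith)
    simpa using this
  rw [Real.sinh_sub] at h2
  linarith

lemma artanh_tanh' (a : ℝ) : artanh (Real.tanh a) = a := by
  have hc := Real.cosh_pos a
  rw [artanh, Real.tanh_eq_sinh_div_cosh,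
    add_div' _ _ _ hc.ne', sub_div' hc.ne', one_mul,
    Real.cosh_add_sinh, Real.cosh_sub_sinh,
    div_div_div_cancel_right₀ hc.ne', ← Real.exp_sub,
    show a - -a = 2 * a by ring, Real.log_exp]
  ring

lemma continuous_tanh' : Continuous Real.tanh := by
  have : Real.tanh = fun x => Real.sinh x / Real.cosh x := by
    funext x; exact Real.tanh_eq_sinh_div_cosh x
  rw [this]
  exact Real.continuous_sinh.div Real.continuous_cosh (fun x => (Real.cosh_pos x).ne')

theorem stmt3 (τ : ℝ) (hτ : 0 < τ) (T : ℝ) (hT : T = Real.tanh (2 * τ) / 2)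
    (u0 : ℝ → ℂ) (hu0 : MemLp u0 2 (volume.restrict (Set.Ioo 0 τ))) (z : ℂ) :
    PhiH0 τ u0 z =
      Phi0 T (fun t => (((1 - 4 * (T - t) ^ 2) ^ (-(1 : ℝ) / 4) : ℝ) : ℂ) *
        u0 (τ - artanh (2 * (T - t)) / 2)) z := by
  set g : ℝ → ℝ := fun s => T - Real.tanh (2 * (τ - s)) / 2 with hg
  have hmono : StrictMono g := by
    intro s₁ s₂ h
    have := tanh_strictMono' (show 2 * (τ - s₂) < 2 * (τ - s₁) by linarith)
    simp only [hg]
    linarith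
  have hg0 : g 0 = 0 := by simp only [hg]; rw [hT]; ring_nf
  have hgτ : g τ = T := by simp only [hg]; norm_num [Real.tanh_zero]
  have hcont : Continuous g :=
    continuous_const.sub ((continuous_tanh'.comp (by continuity)).div_const 2)
  have himg : g '' Set.Ioo 0 τ = Set.Ioo 0 T := by
    apply Set.Subset.antisymm
    · rintro _ ⟨s, hs, rfl⟩
      exact ⟨hg0 ▸ hmono hs.1, hgτ ▸ hmono hs.2⟩
    · intro σ hσ
      have := intermediate_value_Ioo hτ.le hcont.continuousOn
      rw [hg0, hgτ] at this
      exact this hσ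
  have hderiv : ∀ s ∈ Set.Ioo 0 τ,
      HasDerivWithinAt g ((fun x => (Real.cosh (2 * (τ - x)) ^ 2)⁻¹) s) (Set.Ioo 0 τ) s := by
    intro s _
    have hin : HasDerivAt (fun x : ℝ => 2 * (τ - x)) (-2) s := by
      have : HasDerivAt (fun x : ℝ => 2 * (τ - x)) (2 * (0 - 1)) s :=
        ((hasDerivAt_const s τ).sub (hasDerivAt_id s)).const_mul 2
      simpa using this
    have hsd : HasDerivAt (fun x : ℝ => Real.sinh (2 * (τ - x)))
        (Real.cosh (2 * (τ - s)) * (-2)) s := (Real.hasDerivAt_sinh _).comp s hin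
    have hcd : HasDerivAt (fun x : ℝ => Real.cosh (2 * (τ - x)))
        (Real.sinh (2 * (τ - s)) * (-2)) s := (Real.hasDerivAt_cosh _).comp s hin
    have hq : HasDerivAt (fun x : ℝ => Real.sinh (2 * (τ - x)) / Real.cosh (2 * (τ - x)))
        ((Real.cosh (2 * (τ - s)) * (-2) * Real.cosh (2 * (τ - s)) -
          Real.sinh (2 * (τ - s)) * (Real.sinh (2 * (τ - s)) * (-2))) /
          Real.cosh (2 * (τ - s)) ^ 2) s := hsd.div hcd (Real.cosh_pos _).ne'
    have h5 : HasDerivAt g (-(((Real.cosh (2 * (τ - s)) * (-2) * Real.cosh (2 * (τ - s)) -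
        Real.sinh (2 * (τ - s)) * (Real.sinh (2 * (τ - s)) * (-2))) /
        Real.cosh (2 * (τ - s)) ^ 2) / 2)) s := by
      have hgeq : g = fun x => T - (fun x : ℝ =>
          Real.sinh (2 * (τ - x)) / Real.cosh (2 * (τ - x))) x / 2 := by
        funext x; simp only [hg, Real.tanh_eq_sinh_div_cosh]
      rw [hgeq]
      exact (hq.div_const 2).const_sub T
    have : HasDerivAt g ((Real.cosh (2 * (τ - s)) ^ 2)⁻¹) s := by
      convert h5 using 1
      have hid := Real.cosh_sq_sub_sinh_sq (2 * (τ - s))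
      have hcp := (Real.cosh_pos (2 * (τ - s)))
      field_simp
      nlinarith [hcp]
    exact this.hasDerivWithinAt
  unfold PhiH0 Phi0
  rw [← himg,
    MeasureTheory.integral_image_eq_integral_abs_deriv_smul measurableSet_Ioo hderiv
      hmono.injective.injOn _, ← MeasureTheory.integral_const_mul]
  apply MeasureTheory.setIntegral_congr_fun measurableSet_Ioo
  intro s hs
  dsimp only
  set a := 2 * (τ - s) with ha
  have ha0 : 0 < a := by simp only [ha]; nlinarith [hs.2]
  have hsh : 0 < Real.sinh a := by
    have : Real.sinh 0 < Real.sinh a := Real.sinh_lt_sinh.2 ha0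
    simpa using this
  have hch := Real.cosh_pos a
  have hth : 0 < Real.tanh a := by
    rw [Real.tanh_eq_sinh_div_cosh]; positivity
  have hart : τ - artanh (2 * (T - g s)) / 2 = s := by
    have h1 : T - g s = Real.tanh a / 2 := by simp only [hg]; ring
    rw [h1, show 2 * (Real.tanh a / 2) = Real.tanh a by ring, artanh_tanh']
    simp only [ha]; ring
  rw [hart]
  have hTg : T - g s = Real.tanh a / 2 := by simp only [hg]; ring
  rw [hTg]
  have hbase : 1 - 4 * (Real.tanh a / 2) ^ 2 = (Real.cosh a ^ 2)⁻¹ := by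
    rw [Real.tanh_eq_sinh_div_cosh]
    have hid := Real.cosh_sq_sub_sinh_sq a
    field_simp
    nlinarith [hch]
  rw [hbase]
  -- the complex exponential factors agree
  have hs0 : (Real.sinh a : ℂ) ≠ 0 := by exact_mod_cast hsh.ne'
  have hc0 : (Real.cosh a : ℂ) ≠ 0 := by exact_mod_cast hch.ne'
  have hexp : Complex.exp (-z ^ 2 / (4 * ((Real.tanh a / 2 : ℝ) : ℂ))) =
      Complex.exp (-((Real.cosh a / Real.sinh a : ℝ) : ℂ) * z ^ 2 / 2) := by
    congr 1
    rw [Real.tanh_eq_sinh_div_cosh]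
    push_cast
    field_simp
    ring
  rw [hexp]
  -- the real scalar identity
  have hscal : Real.sqrt (2 / Real.pi) * Real.sinh a ^ (-(3 : ℝ) / 2) *
      (2 * Real.sqrt Real.pi * ((Real.tanh a / 2) ^ ((3 : ℝ) / 2))) =
      (Real.cosh a ^ 2)⁻¹ * ((Real.cosh a ^ 2)⁻¹ ^ (-(1 : ℝ) / 4)) := by
    have hπ := Real.pi_pos
    rw [Real.tanh_eq_sinh_div_cosh]
    rw [Real.sqrt_div (by norm_num) Real.pi]
    rw [show Real.sinh a / Real.cosh a / 2 = Real.sinh a / (2 * Real.cosh a) by ring]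
    rw [Real.div_rpow hsh.le (by positivity), Real.mul_rpow (by norm_num) hch.le]
    rw [show (-(3 : ℝ) / 2) = -((3:ℝ)/2) by norm_num, Real.rpow_neg hsh.le]
    have hw : (Real.cosh a ^ 2)⁻¹ = Real.cosh a ^ (-(2:ℝ)) := by
      rw [Real.rpow_neg hch.le, show ((2:ℝ)) = ((2:ℕ):ℝ) by norm_num, Real.rpow_natCast]
    rw [hw, ← Real.rpow_mul hch.le, show ((-(2:ℝ)) * (-(1:ℝ) / 4)) = (1:ℝ)/2 by norm_num,
      ← Real.rpow_add hch, show (-(2:ℝ) + 1/2) = -((3:ℝ)/2) by norm_num,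
      Real.rpow_neg hch.le]
    have h2a : (2:ℝ) ^ ((3:ℝ)/2) = 2 * 2 ^ ((1:ℝ)/2) := by
      rw [show ((3:ℝ)/2) = 1 + (1:ℝ)/2 by norm_num, Real.rpow_add (by norm_num), Real.rpow_one]
    rw [h2a, Real.sqrt_eq_rpow 2]
    have hne1 : Real.sqrt Real.pi ≠ 0 := by positivity
    have hne2 : Real.sinh a ^ ((3:ℝ)/2) ≠ 0 := by positivity
    have hne3 : Real.cosh a ^ ((3:ℝ)/2) ≠ 0 := by positivity
    have hne4 : (2:ℝ) ^ ((1:ℝ)/2) ≠ 0 := by positivity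
    field_simp
  -- conclude
  have hD0 : (2 * Real.sqrt Real.pi * ((Real.tanh a / 2) ^ ((3 : ℝ) / 2))) ≠ 0 := by
    positivity
  have hreal : Real.sqrt (2 / Real.pi) * Real.sinh a ^ (-(3 : ℝ) / 2) =
      (Real.cosh a ^ 2)⁻¹ * ((Real.cosh a ^ 2)⁻¹ ^ (-(1 : ℝ) / 4)) /
        (2 * Real.sqrt Real.pi * ((Real.tanh a / 2) ^ ((3 : ℝ) / 2))) := by
    rw [eq_div_iff hD0]
    exact hscal
  have key : ((Real.sqrt (2 / Real.pi) * Real.sinh a ^ (-(3 : ℝ) / 2) : ℝ) : ℂ) =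
      (((Real.cosh a ^ 2)⁻¹ * ((Real.cosh a ^ 2)⁻¹ ^ (-(1 : ℝ) / 4)) /
        (2 * Real.sqrt Real.pi * ((Real.tanh a / 2) ^ ((3 : ℝ) / 2))) : ℝ) : ℂ) := by
    rw [hreal]
  rw [Complex.real_smul]
  rw [show |(fun x => (Real.cosh (2 * (τ - x)) ^ 2)⁻¹) s| = (Real.cosh a ^ 2)⁻¹ by
    dsimp only; rw [← ha]; exact abs_of_pos (by positivity)]
  push_cast at key ⊢
  linear_combination (z * Complex.exp (-(Complex.cosh (a:ℂ) / Complex.sinh (a:ℂ)) * z ^ 2 / 2) *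
    u0 s) * key
end
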